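/- Let $a > 0$, $b \in \mathbb{R}$, $\tau = b+ia$. Then $\sum_{m,n \in \mathbb{Z}} (-1)^{mn} e^{-\frac{\pi}{2a}(m+n\tau)(m+n\bar\tau)} e^{-\frac{\pi}{a}(m+n\bar\tau)z} e^{-\frac{\pi}{2a}z^2} = \sqrt{2a}\, \Big(\sum_{l\in\mathbb{Z}} e^{-\pi i \bar\tau l^2}\Big)\Big(\sum_{k\in\mathbb{Z}} e^{\pi i \tau k^2} e^{2\pi i k z}\Big)$ for all $z \in \mathbb{C}$. -/

import Mathlib

/-!
For fixed `n` the summand is a Gaussian in `m`. Completing the square and applying Poisson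
summation (`Complex.tsum_exp_neg_quadratic`) turns the sum over `m` into `√(2a)` times a sum over
`k` whose exponent, in terms of `l = n - k`, is `πi(-τ̄)l² + πiτk² + 2πikz`. The double sum is
therefore `√(2a)` times the convolution over `ℤ` of the two theta series, which sums to their
product. Absolute convergence of the double series rests on a bound for `∑ₘ exp(-α(m + t)²)`
that is uniform in `t`, since this sum only depends on `t` modulo `1`.
-/

/-- The Gaussian double-sum term for the degree-1 theta formula. -/
noncomputable def degOneThetaTerm (a : ℝ) (τ z : ℂ) (m n : ℤ) : ℂ :=
  (-1 : ℂ) ^ (m * n) *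
  Complex.exp (-((Real.pi : ℂ) / (2 * (a : ℂ))) *
      (((m : ℂ) + (n : ℂ) * τ) * ((m : ℂ) + (n : ℂ) * (starRingEnd ℂ) τ))) *
  Complex.exp (-((Real.pi : ℂ) / (a : ℂ)) * ((m : ℂ) + (n : ℂ) * (starRingEnd ℂ) τ) * z) *
  Complex.exp (-((Real.pi : ℂ) / (2 * (a : ℂ))) * z ^ 2)

open Complex Real
open scoped ComplexConjugate

lemma summable_exp_neg_mul_sq_add_mul_abs {α : ℝ} (hα : 0 < α) (S : ℝ) :
    Summable fun m : ℤ => rexp (-(α * m ^ 2) + S * |(m : ℝ)|) := by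
  refine (summable_pow_mul_jacobiTheta₂_term_bound (S / (2 * π)) (T := α / π) (by positivity)
    0).congr fun m => ?_
  rw [pow_zero, one_mul]
  congr 1
  field_simp
  push_cast
  ring

lemma exp_neg_mul_add_sq_le {α s : ℝ} (hα : 0 ≤ α) (hs₀ : 0 ≤ s) (hs₁ : s ≤ 1) (x : ℝ) :
    rexp (-(α * (x + s) ^ 2)) ≤ rexp (-(α * x ^ 2) + 2 * α * |x|) := by
  rw [Real.exp_le_exp]
  have hxs : -|x| ≤ x * s := by nlinarith [neg_abs_le x, abs_nonneg x]
  nlinarith [sq_nonneg s]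

lemma exp_neg_mul_add_sq_eq_comp_fract (α t : ℝ) :
    (fun m : ℤ => rexp (-(α * (m + t) ^ 2)))
      = (fun m : ℤ => rexp (-(α * (m + Int.fract t) ^ 2))) ∘ Equiv.addRight ⌊t⌋ := by
  ext m
  simp only [Function.comp_apply, Equiv.coe_addRight, Int.cast_add, Int.fract]
  ring_nf

lemma summable_exp_neg_mul_add_sq {α : ℝ} (hα : 0 < α) (t : ℝ) :
    Summable fun m : ℤ => rexp (-(α * (m + t) ^ 2)) := by
  rw [exp_neg_mul_add_sq_eq_comp_fract, Equiv.summable_iff]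
  exact (summable_exp_neg_mul_sq_add_mul_abs hα (2 * α)).of_nonneg_of_le (fun _ => (exp_pos _).le)
    fun m => exp_neg_mul_add_sq_le hα.le (Int.fract_nonneg t) (Int.fract_lt_one t).le m

lemma tsum_exp_neg_mul_add_sq_le {α : ℝ} (hα : 0 < α) (t : ℝ) :
    ∑' m : ℤ, rexp (-(α * (m + t) ^ 2)) ≤ ∑' m : ℤ, rexp (-(α * m ^ 2) + 2 * α * |(m : ℝ)|) := by
  rw [exp_neg_mul_add_sq_eq_comp_fract]
  refine ((Equiv.addRight ⌊t⌋).tsum_eq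
    (fun m : ℤ => rexp (-(α * (m + Int.fract t) ^ 2)))).trans_le ?_
  exact (summable_exp_neg_mul_add_sq hα _).tsum_le_tsum
    (fun m => exp_neg_mul_add_sq_le hα.le (Int.fract_nonneg t) (Int.fract_lt_one t).le m)
    (summable_exp_neg_mul_sq_add_mul_abs hα (2 * α))

lemma summable_exp_neg_mul_add_mul_sq {α β : ℝ} (hα : 0 < α) (hβ : 0 < β) (c γ δ : ℝ) :
    Summable fun p : ℤ × ℤ =>
      rexp (-(α * (p.1 + c * p.2 + γ) ^ 2) - β * p.2 ^ 2 + δ * p.2) := by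
  suffices h : Summable fun q : ℤ × ℤ =>
      rexp (-(β * q.1 ^ 2) + δ * q.1) * rexp (-(α * (q.2 + (c * q.1 + γ)) ^ 2)) by
    refine h.prod_symm.congr fun p => ?_
    simp only [Prod.fst_swap, Prod.snd_swap, ← Real.exp_add]
    ring_nf
  refine (summable_prod_of_nonneg fun q => mul_nonneg (exp_pos _).le (exp_pos _).le).2
    ⟨fun n => ?_, ?_⟩
  · exact (summable_exp_neg_mul_add_sq hα (c * n + γ)).mul_left (rexp (-(β * n ^ 2) + δ * n))
  simp_rw [tsum_mul_left]
  refine ((summable_exp_neg_mul_sq_add_mul_abs hβ |δ|).mul_right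
    (∑' m : ℤ, rexp (-(α * m ^ 2) + 2 * α * |(m : ℝ)|))).of_nonneg_of_le
    (fun n => by positivity) fun n => ?_
  refine mul_le_mul ?_ (tsum_exp_neg_mul_add_sq_le hα _) (by positivity) (by positivity)
  simpa [abs_mul] using le_abs_self (δ * n)

lemma tsum_tsum_mul_sub_eq_tsum_mul_tsum {G R : Type*} [AddGroup G] [NormedRing R]
    [CompleteSpace R] {f g : G → R} (hf : Summable fun l => ‖f l‖)
    (hg : Summable fun k => ‖g k‖) :
    ∑' n, ∑' k, f (n - k) * g k = (∑' l, f l) * ∑' k, g k := by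
  let e : G × G ≃ G × G :=
    ⟨fun p => (p.1 - p.2, p.2), fun p => (p.1 + p.2, p.2), fun p => by simp, fun p => by simp⟩
  have hsum : Summable fun p : G × G => f (e p).1 * g (e p).2 :=
    e.summable_iff.mpr (summable_mul_of_summable_norm hf hg)
  rw [tsum_mul_tsum_of_summable_norm hf hg, ← e.tsum_eq, hsum.tsum_prod]
  rfl

lemma norm_degOneThetaTerm {a : ℝ} (ha : a ≠ 0) (b : ℝ) (z : ℂ) (m n : ℤ) :
    ‖degOneThetaTerm a (b + a * I) z m n‖
      = rexp (-(π / (2 * a) * (m + b * n + z.re) ^ 2) - π * a / 2 * n ^ 2 + -(π * z.im) * n)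
        * rexp (π / (2 * a) * z.im ^ 2) := by
  simp only [degOneThetaTerm, norm_mul, norm_zpow, norm_neg, norm_one, one_zpow, one_mul,
    Complex.norm_exp, ← Real.exp_add]
  congr 1
  simp only [pow_two, map_add, map_mul, conj_ofReal, conj_I, add_re, add_im, neg_re, neg_im,
    mul_re, mul_im, div_re, div_im, I_re, I_im, ofReal_re, ofReal_im, intCast_re, intCast_im,
    re_ofNat, im_ofNat, normSq_ofReal, normSq_ofNat]
  field_simp
  ring

lemma one_div_ofReal_inv_cpow_one_half {x : ℝ} (hx : 0 ≤ x) :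
    1 / ((x⁻¹ : ℝ) : ℂ) ^ (1 / 2 : ℂ) = √x := by
  rw [show (1 / 2 : ℂ) = ((1 / 2 : ℝ) : ℂ) by norm_num, ← ofReal_cpow (inv_nonneg.2 hx),
    Real.inv_rpow hx, ← Real.sqrt_eq_rpow, ofReal_inv, one_div, inv_inv]

lemma tsum_degOneThetaTerm_fst {a : ℝ} (ha : 0 < a) (b : ℝ) (z : ℂ) (n : ℤ) :
    ∑' m : ℤ, degOneThetaTerm a (b + a * I) z m n
      = √(2 * a) * ∑' k : ℤ,
          jacobiTheta₂_term (n - k) 0 (-conj (b + a * I)) * jacobiTheta₂_term k z (b + a * I) := by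
  have ha' : (a : ℂ) ≠ 0 := by exact_mod_cast ha.ne'
  set c : ℂ := ↑((2 * a)⁻¹ : ℝ)
  set w : ℂ := I * n / 2 - (b * n + z) / (2 * a)
  set K : ℂ := -(π / (2 * a)) * (n ^ 2 * (a ^ 2 + b ^ 2) + 2 * n * (b - a * I) * z + z ^ 2)
  have hterm : ∀ m : ℤ, degOneThetaTerm a (b + a * I) z m n
      = cexp (-π * c * m ^ 2 + 2 * π * w * m) * cexp K := fun m => by
    rw [degOneThetaTerm, ← exp_pi_mul_I, ← exp_int_mul]
    simp only [← Complex.exp_add]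
    congr 1
    simp only [c, w, K, map_add, map_mul, conj_ofReal, conj_I]
    push_cast
    field_simp
    ring_nf
    simp only [I_sq]
    ring
  have hdual : ∀ k : ℤ, cexp (-π / c * (k + I * w) ^ 2) * cexp K
      = jacobiTheta₂_term (n - k) 0 (-conj (b + a * I)) * jacobiTheta₂_term k z (b + a * I) :=
      fun k => by
    simp only [jacobiTheta₂_term, ← Complex.exp_add]
    congr 1
    simp only [c, w, K, map_add, map_mul, conj_ofReal, conj_I]
    push_cast
    field_simp
    ring_nf
    simp only [I_sq, I_pow_three, I_pow_four]
    ring_nf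
  have hc : 0 < c.re := by simp only [c, ofReal_re]; positivity
  rw [tsum_congr hterm, tsum_mul_right, tsum_exp_neg_quadratic hc,
    one_div_ofReal_inv_cpow_one_half (by positivity), mul_assoc, ← tsum_mul_right]
  exact congrArg _ (tsum_congr hdual)

lemma summable_degOneThetaTerm {a : ℝ} (ha : 0 < a) (b : ℝ) (z : ℂ) :
    Summable fun p : ℤ × ℤ => degOneThetaTerm a (b + a * I) z p.1 p.2 :=
  .of_norm <| ((summable_exp_neg_mul_add_mul_sq (by positivity) (by positivity) b z.re
    (-(π * z.im))).mul_right _).congr fun p => (norm_degOneThetaTerm ha.ne' b z p.1 p.2).symm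

/-- the theta identity
`∑_{m,n} (-1)^{mn} e^{-(π/2a)(m+nτ)(m+nτ̄)} e^{-(π/a)(m+nτ̄)z} e^{-(π/2a)z²}
  = √(2a) · (∑_l e^{-πiτ̄l²}) · (∑_k e^{πiτk²} e^{2πikz})`. -/
theorem degree_one_theta_identity
    (a b : ℝ) (ha : 0 < a) (τ : ℂ) (hτ : τ = (b : ℂ) + (a : ℂ) * Complex.I)
    (z : ℂ) :
    (∑' p : ℤ × ℤ, degOneThetaTerm a τ z p.1 p.2)
      = (Real.sqrt (2 * a) : ℂ) *
        (∑' l : ℤ, Complex.exp (-(Real.pi * Complex.I * (starRingEnd ℂ) τ * (l : ℂ) ^ 2))) *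
        (∑' k : ℤ, Complex.exp (Real.pi * Complex.I * τ * (k : ℂ) ^ 2) *
          Complex.exp (2 * Real.pi * Complex.I * (k : ℂ) * z)) := by
  subst hτ
  have hsum := summable_degOneThetaTerm ha b z
  have hA : Summable fun l : ℤ => ‖jacobiTheta₂_term l 0 (-conj (b + a * I))‖ :=
    summable_norm_iff.mpr (hasSum_jacobiTheta₂_term 0 (by simpa using ha)).summable
  have hB : Summable fun k : ℤ => ‖jacobiTheta₂_term k z (b + a * I)‖ :=
    summable_norm_iff.mpr (hasSum_jacobiTheta₂_term z (by simpa using ha)).summable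
  rw [hsum.tsum_prod, ← hsum.tsum_comm, tsum_congr (tsum_degOneThetaTerm_fst ha b z),
    tsum_mul_left, tsum_tsum_mul_sub_eq_tsum_mul_tsum hA hB, mul_assoc]
  congr 2 <;> refine tsum_congr fun k => ?_ <;>
    simp only [jacobiTheta₂_term, ← Complex.exp_add] <;> ring_nf
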